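/- arXiv:2102.05170 — 5 statements merged into one kernel-verified Lean document; each statement's English description precedes it below -/
import Mathlib

section
/- If A_1, ..., A_n are pairwise independent events each of probability p, then the probability that exactly one of them occurs is at least n·p·max(0, 1 − (n−1)p). -/
/-!
Let `Bᵢ` be the event that `Aᵢ` occurs and no other `Aⱼ` does. The `Bᵢ` are disjoint and each
lies in the event that exactly one `Aⱼ` occurs, while the union bound gives
`P(Bᵢ) ≥ P(Aᵢ) - ∑_{j ≠ i} P(Aᵢ ∩ Aⱼ) = p - (n - 1) p²`. Summing over `i` yields
`P(exactly one) ≥ n p - n (n - 1) p²`, and the bound is trivial when `1 - (n - 1) p ≤ 0`.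
-/

open MeasureTheory Finset Function

section

variable {Ω ι : Type*}

theorem measure_le_measure_diff_biUnion_add_sum [MeasurableSpace Ω] (μ : Measure Ω)
    (s : Set Ω) (t : ι → Set Ω) (I : Finset ι) :
    μ s ≤ μ (s \ ⋃ j ∈ I, t j) + ∑ j ∈ I, μ (s ∩ t j) :=
  calc μ s ≤ μ (s ∩ ⋃ j ∈ I, t j) + μ (s \ ⋃ j ∈ I, t j) := measure_le_inter_add_sdiff μ _ _
    _ = μ (⋃ j ∈ I, s ∩ t j) + μ (s \ ⋃ j ∈ I, t j) := by rw [Set.inter_iUnion₂]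
    _ ≤ ∑ j ∈ I, μ (s ∩ t j) + μ (s \ ⋃ j ∈ I, t j) := by
        gcongr; exact measure_biUnion_finset_le _ _
    _ = _ := add_comm _ _

section OnlyIn

variable [Fintype ι] [DecidableEq ι]

def onlyIn (A : ι → Set Ω) (i : ι) : Set Ω :=
  A i \ ⋃ j ∈ univ.erase i, A j

theorem pairwise_disjoint_onlyIn (A : ι → Set Ω) : Pairwise (Disjoint on onlyIn A) := by
  intro i j hij
  refine Set.disjoint_left.2 fun ω hωi hωj => hωj.2 ?_
  exact Set.mem_biUnion (mem_erase.2 ⟨hij, mem_univ i⟩) hωi.1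

theorem measurableSet_onlyIn [MeasurableSpace Ω] {A : ι → Set Ω}
    (hA : ∀ i, MeasurableSet (A i)) (i : ι) : MeasurableSet (onlyIn A i) :=
  (hA i).diff (.biUnion (univ.erase i).countable_toSet fun j _ => hA j)

theorem sum_indicator_eq_one_of_mem_onlyIn {A : ι → Set Ω} {i : ι} {ω : Ω}
    (hω : ω ∈ onlyIn A i) : ∑ j, (A j).indicator (fun _ => (1 : ℕ)) ω = 1 := by
  have hnot : ∀ j ≠ i, ω ∉ A j := fun j hj hωj =>
    hω.2 (Set.mem_biUnion (mem_erase.2 ⟨hj, mem_univ j⟩) hωj)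
  rw [sum_eq_single i (fun j _ hj => Set.indicator_of_notMem (hnot j hj) _)
    (fun h => absurd (mem_univ i) h), Set.indicator_of_mem hω.1]

theorem sum_measure_onlyIn_le [MeasurableSpace Ω] (μ : Measure Ω) {A : ι → Set Ω}
    (hA : ∀ i, MeasurableSet (A i)) :
    ∑ i, μ (onlyIn A i) ≤ μ {ω | ∑ j, (A j).indicator (fun _ => (1 : ℕ)) ω = 1} :=
  calc ∑ i, μ (onlyIn A i) = μ (⋃ i, onlyIn A i) := by
        rw [measure_iUnion (pairwise_disjoint_onlyIn A) (measurableSet_onlyIn hA), tsum_fintype]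
    _ ≤ _ := measure_mono (Set.iUnion_subset fun _ _ => sum_indicator_eq_one_of_mem_onlyIn)

theorem sum_measure_le_measure_sum_indicator_eq_one_add [MeasurableSpace Ω] (μ : Measure Ω)
    {A : ι → Set Ω} (hA : ∀ i, MeasurableSet (A i)) :
    ∑ i, μ (A i) ≤ μ {ω | ∑ j, (A j).indicator (fun _ => (1 : ℕ)) ω = 1} +
      ∑ i, ∑ j ∈ univ.erase i, μ (A i ∩ A j) :=
  calc ∑ i, μ (A i) ≤ ∑ i, (μ (onlyIn A i) + ∑ j ∈ univ.erase i, μ (A i ∩ A j)) :=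
        sum_le_sum fun i _ => measure_le_measure_diff_biUnion_add_sum μ _ _ _
    _ = ∑ i, μ (onlyIn A i) + ∑ i, ∑ j ∈ univ.erase i, μ (A i ∩ A j) := sum_add_distrib
    _ ≤ _ := by gcongr; exact sum_measure_onlyIn_le μ hA

end OnlyIn

end

theorem stmt_0_general {Ω : Type*} [MeasurableSpace Ω] (μ : Measure Ω)
    (n : ℕ) (p : ℝ)
    (A : Fin n → Set Ω) (hA : ∀ i, MeasurableSet (A i))
    (hprob : ∀ i, μ (A i) = ENNReal.ofReal p)
    (hpair : ∀ i j, i ≠ j → μ (A i ∩ A j) = ENNReal.ofReal (p ^ 2)) :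
    ENNReal.ofReal ((n : ℝ) * p * max 0 (1 - ((n : ℝ) - 1) * p)) ≤
      μ {ω | (∑ i, (A i).indicator (fun _ => (1 : ℕ)) ω) = 1} := by
  rcases n with _ | m
  · simp
  have key := sum_measure_le_measure_sum_indicator_eq_one_add μ hA
  rw [sum_congr rfl fun i _ => hprob i,
    sum_congr rfl fun i _ => sum_congr rfl fun j hj => hpair i j (ne_of_mem_erase hj).symm] at key
  simp only [sum_const, card_univ, Fintype.card_fin, card_erase_of_mem (mem_univ _),
    Nat.add_sub_cancel, nsmul_eq_mul] at key
  rw [← ENNReal.ofReal_natCast, ← ENNReal.ofReal_natCast m, ← ENNReal.ofReal_mul (by positivity),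
    ← ENNReal.ofReal_mul (by positivity), ← ENNReal.ofReal_mul (by positivity)] at key
  calc ENNReal.ofReal ((↑(m + 1) : ℝ) * p * max 0 (1 - ((↑(m + 1) : ℝ) - 1) * p))
      ≤ ENNReal.ofReal ((↑(m + 1) : ℝ) * p - (↑(m + 1) : ℝ) * ((m : ℝ) * p ^ 2)) := by
        refine ENNReal.ofReal_le_ofReal_iff'.2 ?_
        push_cast
        rcases le_total (1 - (m : ℝ) * p) 0 with h | h
        · right; simp [h]
        · left; rw [add_sub_cancel_right, max_eq_right h]; exact le_of_eq (by ring)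
    _ = ENNReal.ofReal ((↑(m + 1) : ℝ) * p) - ENNReal.ofReal ((↑(m + 1) : ℝ) * ((m : ℝ) * p ^ 2)) :=
        ENNReal.ofReal_sub _ (by positivity)
    _ ≤ _ := tsub_le_iff_right.2 key

theorem stmt_0 {Ω : Type*} [MeasurableSpace Ω] (μ : Measure Ω) [IsProbabilityMeasure μ]
    (n : ℕ) (p : ℝ) (hp0 : 0 ≤ p) (hp1 : p ≤ 1)
    (A : Fin n → Set Ω) (hA : ∀ i, MeasurableSet (A i))
    (hprob : ∀ i, μ (A i) = ENNReal.ofReal p)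
    (hpair : ∀ i j, i ≠ j → μ (A i ∩ A j) = ENNReal.ofReal (p ^ 2)) :
    ENNReal.ofReal ((n : ℝ) * p * max 0 (1 - ((n : ℝ) - 1) * p)) ≤
      μ {ω | (∑ i, (A i).indicator (fun _ => (1 : ℕ)) ω) = 1} :=
  stmt_0_general μ n p A hA hprob hpair
end

section
/- Let n ≥ 2, p ∈ [0,1], and k ∈ {1,...,n−1} with (k−1)/(n−1) ≤ p ≤ k/(n−1). Define x_k = (np/k)(k − (n−1)p)/C(n,k), x_{k+1} = (np/(k+1))((n−1)p − (k−1))/C(n,k+1), and x_m = 0 for other m in {1,...,n}. Then Σ_{m=1}^n C(n−2, m−2) x_m = p². -/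
/-!
Since `C(n-2, m-2) / C(n, m) = m(m-1) / (n(n-1))`, the binomial coefficients cancel against those
in `x_k` and `x_{k+1}`, and the sum collapses to
`p ((k-1)(k-(n-1)p) + k((n-1)p-(k-1))) / (n-1) = p²`.
-/

open Finset

theorem Nat.add_two_mul_add_one_mul_choose_eq (n k : ℕ) :
    (n + 2) * (n + 1) * n.choose k = (n + 2).choose (k + 2) * ((k + 2) * (k + 1)) := by
  rw [mul_assoc, Nat.add_one_mul_choose_eq, ← mul_assoc, Nat.add_one_mul_choose_eq]
  ring

theorem cast_choose_sub_two_mul_eq {n m : ℕ} (hn : 2 ≤ n) (hm : 2 ≤ m) :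
    ((n - 2).choose (m - 2) : ℝ) * (n * (n - 1)) = n.choose m * (m * (m - 1)) := by
  obtain ⟨n, rfl⟩ := Nat.exists_eq_add_of_le' hn
  obtain ⟨m, rfl⟩ := Nat.exists_eq_add_of_le' hm
  have key : ((n + 2) * (n + 1) * n.choose m : ℝ) =
      (n + 2).choose (m + 2) * ((m + 2) * (m + 1)) := by
    exact_mod_cast Nat.add_two_mul_add_one_mul_choose_eq n m
  simp only [Nat.add_sub_cancel]
  push_cast
  linear_combination key

theorem sum_Icc_two_choose_sub_two_mul_eq {n : ℕ} (hn : 2 ≤ n) (x : ℕ → ℝ) :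
    ∑ m ∈ Icc 2 n, ((n - 2).choose (m - 2) : ℝ) * x m =
      ∑ m ∈ Icc 1 n, m * (m - 1) / (n * (n - 1)) * n.choose m * x m := by
  have hn2 : (2 : ℝ) ≤ n := by exact_mod_cast hn
  have hn0 : (n : ℝ) ≠ 0 := by positivity
  have hn1 : (n : ℝ) - 1 ≠ 0 := by linarith
  rw [← insert_Icc_add_one_left_eq_Icc (by omega : 1 ≤ n), sum_insert (by simp)]
  simp only [Nat.cast_one, sub_self, mul_zero, zero_div, zero_mul, zero_add]
  refine sum_congr rfl fun m hm => ?_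
  rw [mem_Icc] at hm
  rw [div_mul_eq_mul_div, mul_comm _ (n.choose m : ℝ), ← cast_choose_sub_two_mul_eq hn hm.1]
  field_simp

theorem stmt_9_general (n k : ℕ) (hn : 2 ≤ n) (hk1 : 1 ≤ k) (hkn : k ≤ n - 1)
    (p : ℝ)
    (x : ℕ → ℝ)
    (hxk : x k = (n : ℝ) * p / (k : ℝ) * ((k : ℝ) - ((n : ℝ) - 1) * p) / (n.choose k : ℝ))
    (hxk1 : x (k + 1) =
      (n : ℝ) * p / ((k : ℝ) + 1) * (((n : ℝ) - 1) * p - ((k : ℝ) - 1)) / (n.choose (k + 1) : ℝ))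
    (hx0 : ∀ m ∈ Finset.Icc 1 n, m ≠ k → m ≠ k + 1 → x m = 0) :
    ∑ m ∈ Finset.Icc 2 n, ((n - 2).choose (m - 2) : ℝ) * x m = p ^ 2 := by
  rw [sum_Icc_two_choose_sub_two_mul_eq hn,
    sum_eq_add_of_mem k (k + 1) (mem_Icc.2 ⟨hk1, by omega⟩) (mem_Icc.2 ⟨by omega, by omega⟩)
      (by omega) fun m hm hmk => by rw [hx0 m hm hmk.1 hmk.2, mul_zero], hxk, hxk1]
  have hn2 : (2 : ℝ) ≤ n := by exact_mod_cast hn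
  have hk : (k : ℝ) ≠ 0 := by positivity
  have hck : (n.choose k : ℝ) ≠ 0 := by exact_mod_cast (Nat.choose_pos (by omega)).ne'
  have hck1 : (n.choose (k + 1) : ℝ) ≠ 0 := by exact_mod_cast (Nat.choose_pos (by omega)).ne'
  have hn1 : (n : ℝ) - 1 ≠ 0 := by linarith
  push_cast
  field_simp
  ring

theorem stmt_9 (n k : ℕ) (hn : 2 ≤ n) (hk1 : 1 ≤ k) (hkn : k ≤ n - 1)
    (p : ℝ) (hp0 : 0 ≤ p) (hp1 : p ≤ 1)
    (hlo : ((k : ℝ) - 1) / ((n : ℝ) - 1) ≤ p) (hhi : p ≤ (k : ℝ) / ((n : ℝ) - 1))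
    (x : ℕ → ℝ)
    (hxk : x k = (n : ℝ) * p / (k : ℝ) * ((k : ℝ) - ((n : ℝ) - 1) * p) / (n.choose k : ℝ))
    (hxk1 : x (k + 1) =
      (n : ℝ) * p / ((k : ℝ) + 1) * (((n : ℝ) - 1) * p - ((k : ℝ) - 1)) / (n.choose (k + 1) : ℝ))
    (hx0 : ∀ m ∈ Finset.Icc 1 n, m ≠ k → m ≠ k + 1 → x m = 0) :
    ∑ m ∈ Finset.Icc 2 n, ((n - 2).choose (m - 2) : ℝ) * x m = p ^ 2 :=
  stmt_9_general n k hn hk1 hkn p x hxk hxk1 hx0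
end

section
/- For every n ≥ 2 and p ∈ [0,1], there exists a probability space and pairwise independent events A_1, ..., A_n, each of probability p, such that the probability that exactly one of them occurs equals n·p·max(0, 1 − (n−1)p). -/
/-!
Let `S` be a random subset of `Fin n` which, given its size, is uniformly distributed, and let
`A i` be the event `i ∈ S`. Counting the `m`-sets that contain a fixed `u` gives
`P(u ⊆ S) = E[C(|S|, |u|)] / C(n, |u|)`, so the `A i` have probability `p` and are pairwise
independent as soon as `E[C(|S|, c)] = C(n, c) p ^ c` for `c ≤ 2`, as for a binomial size.
Writing `(n - 1) p = k + t` with `k ≤ n - 2` an integer and `t ∈ [0, 1]`, such a size law puts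
mass `n p (1 - t) / (k + 1)` on `k + 1`, mass `n p t / (k + 2)` on `k + 2` and the rest on `0`;
the first two masses sum to at most `1` because `(k + 1) (n - k - 2) + n (1 - t) ^ 2 ≥ 0`.
Exactly one event occurs iff `|S| = 1`, which has probability `n p (1 - (n - 1) p)` when `k = 0`
and `0` otherwise.
-/

open MeasureTheory Finset

section ExchangeableSubset

variable {α : Type*} [Fintype α]

lemma sum_Icc_univ_apply_card [DecidableEq α] {M : Type*} [AddCommMonoid M] (f : ℕ → M)
    (u : Finset α) :
    ∑ s ∈ Icc u univ, f #s =
      ∑ j ∈ range (Fintype.card α - #u + 1), (Fintype.card α - #u).choose j • f (#u + j) := by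
  have hdisj {t} (ht : t ∈ (univ \ u).powerset) : Disjoint u t :=
    disjoint_of_subset_right (mem_powerset.1 ht) disjoint_sdiff
  rw [Icc_eq_image_powerset (subset_univ u), sum_image, ← card_compl, compl_eq_univ_sdiff,
    ← sum_powerset_apply_card (fun j => f (#u + j))]
  · exact sum_congr rfl fun t ht => by rw [card_union_of_disjoint (hdisj ht)]
  · intro t ht t' ht' (h : u ∪ t = u ∪ t')
    rw [← union_sdiff_cancel_left (hdisj ht), h, union_sdiff_cancel_left (hdisj ht')]

lemma sum_Icc_univ_div_choose [DecidableEq α] (q : ℕ → ℝ) (u : Finset α) :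
    ∑ s ∈ Icc u univ, q #s / (Fintype.card α).choose #s =
      (∑ m ∈ range (Fintype.card α + 1), m.choose #u * q m) / (Fintype.card α).choose #u := by
  rw [sum_Icc_univ_apply_card (fun m => q m / (Fintype.card α).choose m)]
  set n := Fintype.card α
  have hu : #u ≤ n := card_le_univ u
  have hpos : (0 : ℝ) < n.choose #u := by exact_mod_cast Nat.choose_pos hu
  rw [eq_div_iff hpos.ne', sum_mul]
  conv_rhs => rw [show n + 1 = #u + (n - #u + 1) by omega, sum_range_add]
  have hlow : ∑ m ∈ range #u, (m.choose #u : ℝ) * q m = 0 :=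
    sum_eq_zero fun m hm => by rw [Nat.choose_eq_zero_of_lt (mem_range.1 hm)]; simp
  rw [hlow, zero_add]
  refine sum_congr rfl fun j hj => ?_
  have hj : #u + j ≤ n := by rw [mem_range] at hj; omega
  have hc : (0 : ℝ) < n.choose (#u + j) := by exact_mod_cast Nat.choose_pos hj
  have key : (n.choose (#u + j) * (#u + j).choose #u : ℝ) = n.choose #u * (n - #u).choose j := by
    exact_mod_cast (by simpa using Nat.choose_mul (n := n) (Nat.le_add_right #u j))
  rw [nsmul_eq_mul]
  field_simp
  linear_combination -q (#u + j) * key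

noncomputable def exchangeableMeasure (q : ℕ → ℝ) : Measure (Finset α) :=
  ∑ s, ENNReal.ofReal (q #s / (Fintype.card α).choose #s) • Measure.dirac s

variable {q : ℕ → ℝ}

lemma exchangeableMeasure_apply (hq : ∀ m, 0 ≤ q m) (B : Set (Finset α))
    [DecidablePred (· ∈ B)] :
    exchangeableMeasure q B =
      ENNReal.ofReal (∑ s ∈ univ.filter (· ∈ B), q #s / (Fintype.card α).choose #s) := by
  rw [ENNReal.ofReal_sum_of_nonneg fun s _ => div_nonneg (hq _) (Nat.cast_nonneg _),
    exchangeableMeasure, Measure.coe_finsetSum, Finset.sum_apply, sum_filter]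
  refine sum_congr rfl fun s _ => ?_
  by_cases hs : s ∈ B <;> simp [hs]

lemma exchangeableMeasure_superset [DecidableEq α] (hq : ∀ m, 0 ≤ q m) (u : Finset α) :
    exchangeableMeasure q {s | u ⊆ s} = ENNReal.ofReal
      ((∑ m ∈ range (Fintype.card α + 1), m.choose #u * q m) / (Fintype.card α).choose #u) := by
  rw [exchangeableMeasure_apply hq, ← sum_Icc_univ_div_choose]
  congr 2
  ext s
  simp

lemma exchangeableMeasure_card_eq (hq : ∀ m, 0 ≤ q m) {m : ℕ} (hm : m ≤ Fintype.card α) :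
    exchangeableMeasure q {s : Finset α | #s = m} = ENNReal.ofReal (q m) := by
  have hpos : (0 : ℝ) < (Fintype.card α).choose m := by exact_mod_cast Nat.choose_pos hm
  rw [exchangeableMeasure_apply hq]
  simp only [Set.mem_ofPred_eq, univ_filter_card_eq]
  rw [sum_congr rfl fun s hs => by rw [(mem_powersetCard_univ.1 hs)], sum_const, card_powersetCard,
    Finset.card_univ, nsmul_eq_mul]
  field_simp

lemma sum_indicator_mem_eq_card (s : Finset α) :
    ∑ i, {t : Finset α | i ∈ t}.indicator (fun _ => (1 : ℕ)) s = #s := by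
  classical
  simp [Set.indicator_apply]

end ExchangeableSubset

def threePointLaw (k : ℕ) (a b : ℝ) (m : ℕ) : ℝ :=
  (if m = k + 1 then a else 0) + (if m = k + 2 then b else 0) + (if m = 0 then 1 - a - b else 0)

section ThreePointLaw

variable {k : ℕ} {a b : ℝ}

lemma threePointLaw_nonneg (ha : 0 ≤ a) (hb : 0 ≤ b) (hab : a + b ≤ 1) (m : ℕ) :
    0 ≤ threePointLaw k a b m := by
  unfold threePointLaw
  split_ifs <;> linarith

lemma sum_range_mul_threePointLaw {N : ℕ} (hk : k + 2 ≤ N) (f : ℕ → ℝ) :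
    ∑ m ∈ range (N + 1), f m * threePointLaw k a b m =
      f (k + 1) * a + f (k + 2) * b + f 0 * (1 - a - b) := by
  simp only [threePointLaw, mul_add, mul_ite, mul_zero, sum_add_distrib, sum_ite_eq', mem_range]
  rw [if_pos (by omega), if_pos (by omega), if_pos (by omega)]

end ThreePointLaw

lemma exists_eq_nat_add_mem_Icc {x : ℝ} {N : ℕ} (hx0 : 0 ≤ x) (hxN : x ≤ N + 1) :
    ∃ k ≤ N, ∃ t ∈ Set.Icc (0 : ℝ) 1, x = k + t := by
  by_cases hx : x < N + 1
  · refine ⟨⌊x⌋₊, Nat.le_of_lt_succ ((Nat.floor_lt hx0).2 (by exact_mod_cast hx)), x - ⌊x⌋₊,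
      ⟨by linarith [Nat.floor_le hx0], by linarith [Nat.lt_floor_add_one x]⟩, by ring⟩
  · exact ⟨N, le_rfl, 1, ⟨zero_le_one, le_rfl⟩, by linarith⟩

noncomputable def sizeLaw (n k : ℕ) (p t : ℝ) : ℕ → ℝ :=
  threePointLaw k (n * p * (1 - t) / (k + 1)) (n * p * t / (k + 2))

section SizeLaw

variable {n k : ℕ} {p t : ℝ}

lemma sizeLaw_nonneg (hk : k + 2 ≤ n) (hp : 0 ≤ p) (ht : t ∈ Set.Icc (0 : ℝ) 1)
    (hkt : ((n : ℝ) - 1) * p = k + t) (m : ℕ) : 0 ≤ sizeLaw n k p t m := by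
  obtain ⟨ht0, ht1⟩ := ht
  have hk' : (k : ℝ) + 2 ≤ n := by exact_mod_cast hk
  refine threePointLaw_nonneg (by positivity) (by positivity) ?_ m
  rw [div_add_div _ _ (by positivity) (by positivity), div_le_one (by positivity)]
  have hn1 : (0 : ℝ) < n - 1 := by linarith
  have hp' : p = (k + t) / ((n : ℝ) - 1) := by rw [← hkt]; field_simp
  subst hp'
  rw [← sub_nonneg]
  have key : 0 ≤ ((k : ℝ) + 1) * (n - k - 2) + n * (1 - t) ^ 2 := by
    have : (0 : ℝ) ≤ n - k - 2 := by linarith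
    positivity
  field_simp
  nlinarith [key]

lemma sum_choose_mul_sizeLaw (hk : k + 2 ≤ n) (hkt : ((n : ℝ) - 1) * p = k + t)
    {c : ℕ} (hc : c ≤ 2) :
    ∑ m ∈ range (n + 1), m.choose c * sizeLaw n k p t m = n.choose c * p ^ c := by
  have hn : (2 : ℝ) ≤ n := by exact_mod_cast le_of_add_le_right hk
  rw [sizeLaw, sum_range_mul_threePointLaw hk]
  interval_cases c
  · simp
  · simp only [Nat.choose_one_right]
    push_cast
    field_simp
    ring
  · simp only [Nat.cast_choose_two]
    push_cast
    field_simp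
    linear_combination (-((k : ℝ) + 1) * (k + 2) * n * p) * hkt

lemma sizeLaw_one (hkt : ((n : ℝ) - 1) * p = k + t) (ht : t ∈ Set.Icc (0 : ℝ) 1) :
    sizeLaw n k p t 1 = n * p * max 0 (1 - ((n : ℝ) - 1) * p) := by
  obtain ⟨ht0, ht1⟩ := ht
  rcases Nat.eq_zero_or_pos k with rfl | hk
  · rw [Nat.cast_zero, zero_add] at hkt
    rw [max_eq_right (by linarith)]
    simp [sizeLaw, threePointLaw, hkt]
  · have : (1 : ℝ) ≤ k := by exact_mod_cast hk
    rw [max_eq_left (by linarith)]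
    simp [sizeLaw, threePointLaw]
    omega

end SizeLaw

theorem stmt_11 (n : ℕ) (hn : 2 ≤ n) (p : ℝ) (hp0 : 0 ≤ p) (hp1 : p ≤ 1) :
    ∃ (Ω : Type) (_ : MeasurableSpace Ω) (μ : Measure Ω) (_ : IsProbabilityMeasure μ)
      (A : Fin n → Set Ω),
      (∀ i, MeasurableSet (A i)) ∧
      (∀ i, μ (A i) = ENNReal.ofReal p) ∧
      (∀ i j, i ≠ j → μ (A i ∩ A j) = μ (A i) * μ (A j)) ∧
      μ {ω | (∑ i, (A i).indicator (fun _ => (1 : ℕ)) ω) = 1} =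
        ENNReal.ofReal ((n : ℝ) * p * max 0 (1 - ((n : ℝ) - 1) * p)) := by
  have hn' : (2 : ℝ) ≤ n := by exact_mod_cast hn
  obtain ⟨k, hk, t, ht, hkt⟩ := exists_eq_nat_add_mem_Icc (x := ((n : ℝ) - 1) * p) (N := n - 2)
    (by nlinarith) (by push_cast [Nat.cast_sub hn]; nlinarith)
  replace hk : k + 2 ≤ n := by omega
  have hq := sizeLaw_nonneg hk hp0 ht hkt
  set μ : Measure (Finset (Fin n)) := exchangeableMeasure (sizeLaw n k p t)
  have hsuperset (u : Finset (Fin n)) (hu : #u ≤ 2) : μ {s | u ⊆ s} = ENNReal.ofReal (p ^ #u) := by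
    have hpos : (0 : ℝ) < n.choose #u := by
      exact_mod_cast Nat.choose_pos ((card_le_univ u).trans_eq (Fintype.card_fin n))
    rw [exchangeableMeasure_superset hq, Fintype.card_fin, sum_choose_mul_sizeLaw hk hkt hu,
      mul_div_cancel_left₀ _ hpos.ne']
  have hA (i : Fin n) : μ {s | i ∈ s} = ENNReal.ofReal p := by
    simpa using hsuperset {i} (by simp)
  refine ⟨Finset (Fin n), inferInstance, μ, ⟨by simpa using hsuperset ∅ (by simp)⟩,
    fun i => {s | i ∈ s}, fun _ => .of_discrete, hA, fun i j hij => ?_, ?_⟩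
  · rw [hA, hA, ← ENNReal.ofReal_mul hp0, ← sq, ← card_pair hij, ← hsuperset _ (card_pair hij).le]
    congr 1
    ext s
    simp [insert_subset_iff]
  · simp only [sum_indicator_mem_eq_card]
    rw [exchangeableMeasure_card_eq hq (by simp; omega), sizeLaw_one hkt ht]
end

section
/- For every n ≥ 2 and p with 1/(n−1) ≤ p ≤ 1, there exist pairwise independent events A_1, ..., A_n each of probability p such that with probability 1 the number of occurring events is not exactly 1. -/
/-!
Let `S` be a random subset of `{1, …, n}` that is uniform given its size, and `A i = {i ∈ S}`.
Then `P(T ⊆ S) = E[C(|S|, |T|)] / C(n, |T|)`, so the `A i` have probability `p` and are pairwise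
independent as soon as the law of `|S|` has the first two factorial moments of `Binomial(n, p)`:
`E |S| = n p` and `E C(|S|, 2) = C(n, 2) p²`. The number of occurring events is `|S|`, so it
suffices to find such a law without mass at `1`. For `p = 1` take `|S| = n`. Otherwise, with
`t = (n - 1) p ∈ [1, n - 1)` and `k = ⌊t⌋ + 1`, a law on `{0, k, k + 1}` works: the two moment
equations determine the masses at `k` and `k + 1`; these are nonnegative because `k - 1 ≤ t ≤ k`,
and their sum is at most `1` because `k + 1 ≤ n`.
-/

open MeasureTheory

section

open Finset

lemma sum_ofReal_smul_dirac_apply {β : Type*} [Fintype β] [MeasurableSpace β]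
    [MeasurableSingletonClass β] (f : β → ℝ) (hf : 0 ≤ f) (E : Set β) [DecidablePred (· ∈ E)] :
    (∑ x, ENNReal.ofReal (f x) • Measure.dirac x) E = ENNReal.ofReal (∑ x with x ∈ E, f x) := by
  rw [Measure.finsetSum_apply, ENNReal.ofReal_sum_of_nonneg fun x _ => hf x, sum_filter]
  refine sum_congr rfl fun x _ => ?_
  by_cases hx : x ∈ E <;> simp [hx]

lemma card_filter_powersetCard_subset_mul_choose {α : Type*} [Fintype α] [DecidableEq α]
    (T : Finset α) (m : ℕ) :
    #((univ.powersetCard m).filter (T ⊆ ·)) * (Fintype.card α).choose #T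
      = (Fintype.card α).choose m * m.choose #T := by
  rcases le_or_gt #T m with hTm | hmT
  · rw [card_filter_powersetCard_subset T univ m (subset_univ T) hTm, card_univ,
      Nat.choose_mul hTm, mul_comm]
  · have : (univ.powersetCard m).filter (T ⊆ ·) = ∅ := by
      refine filter_false_of_mem fun S hS hTS => ?_
      have := card_le_card hTS
      rw [(mem_powersetCard.1 hS).2] at this
      omega
    simp [this, Nat.choose_eq_zero_of_lt hmT]

section SizeUniform

variable {α : Type*} [Fintype α]

noncomputable def sizeUniform (w : ℕ → ℝ) : Measure (Finset α) :=
  ∑ S, ENNReal.ofReal (w #S / (Fintype.card α).choose #S) • Measure.dirac S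

variable {w : ℕ → ℝ}

lemma sizeUniform_apply (hw : 0 ≤ w) (E : Set (Finset α)) [DecidablePred (· ∈ E)] :
    sizeUniform w E = ENNReal.ofReal (∑ S with S ∈ E, w #S / (Fintype.card α).choose #S) :=
  sum_ofReal_smul_dirac_apply _ (fun _ => div_nonneg (hw _) (Nat.cast_nonneg _)) E

lemma sizeUniform_setOf_card_eq (hw : 0 ≤ w) {m : ℕ} (hm : m ≤ Fintype.card α) :
    sizeUniform w {S : Finset α | #S = m} = ENNReal.ofReal (w m) := by
  rw [sizeUniform_apply hw]
  have hchoose : ((Fintype.card α).choose m : ℝ) ≠ 0 := by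
    exact_mod_cast (Nat.choose_pos hm).ne'
  have hfilter : univ.filter (· ∈ {S : Finset α | #S = m}) = univ.powersetCard m := by
    ext S; simp
  rw [hfilter, sum_congr rfl fun S hS => by rw [(mem_powersetCard.1 hS).2], sum_const,
    card_powersetCard, card_univ, nsmul_eq_mul, mul_div_cancel₀ _ hchoose]

lemma sizeUniform_setOf_superset [DecidableEq α] (hw : 0 ≤ w) (T : Finset α) :
    sizeUniform w {S | T ⊆ S} = ENNReal.ofReal
      ((∑ m ∈ range (Fintype.card α + 1), w m * m.choose #T) / (Fintype.card α).choose #T) := by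
  rw [sizeUniform_apply hw, sum_div]
  congr 1
  set n := Fintype.card α
  have hnT : (n.choose #T : ℝ) ≠ 0 := by
    exact_mod_cast (Nat.choose_pos (card_le_univ T)).ne'
  rw [← sum_fiberwise_of_maps_to (s := univ.filter (· ∈ {S | T ⊆ S})) (t := range (n + 1)) (g := card)
    fun S _ => mem_range_succ_iff.2 (card_le_univ S)]
  refine sum_congr rfl fun m hm => ?_
  have hnm : (n.choose m : ℝ) ≠ 0 := by
    exact_mod_cast (Nat.choose_pos (mem_range_succ_iff.1 hm)).ne'
  have hfiber : (univ.filter (· ∈ {S | T ⊆ S})).filter (#· = m)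
      = (univ.powersetCard m).filter (T ⊆ ·) := by
    ext S; simp [and_comm]
  have hcount : (#((univ.powersetCard m).filter (T ⊆ ·)) : ℝ) * n.choose #T
      = n.choose m * m.choose #T := by
    exact_mod_cast card_filter_powersetCard_subset_mul_choose T m
  rw [hfiber, sum_congr rfl fun S hS => by rw [(mem_powersetCard.1 (mem_filter.1 hS).1).2],
    sum_const, nsmul_eq_mul]
  field_simp
  linear_combination w m * hcount

lemma sizeUniform_setOf_superset_of_moment [DecidableEq α] (hw : 0 ≤ w) {p : ℝ} {T : Finset α}
    (hmoment : ∑ m ∈ range (Fintype.card α + 1), w m * m.choose #T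
      = (Fintype.card α).choose #T * p ^ #T) :
    sizeUniform w {S | T ⊆ S} = ENNReal.ofReal (p ^ #T) := by
  have hchoose : ((Fintype.card α).choose #T : ℝ) ≠ 0 := by
    exact_mod_cast (Nat.choose_pos (card_le_univ T)).ne'
  rw [sizeUniform_setOf_superset hw, hmoment, mul_div_cancel_left₀ _ hchoose]

end SizeUniform

lemma exists_two_point_weights {n k p : ℝ} (hk : 1 ≤ k) (hkn : k + 1 ≤ n)
    (hlo : k - 1 ≤ (n - 1) * p) (hhi : (n - 1) * p ≤ k) :
    ∃ a b : ℝ, 0 ≤ a ∧ 0 ≤ b ∧ a + b ≤ 1 ∧ a * k + b * (k + 1) = n * p ∧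
      a * (k * (k - 1)) + b * ((k + 1) * k) = n * (n - 1) * p ^ 2 := by
  set t := (n - 1) * p with ht
  have hp : 0 ≤ p := by nlinarith
  have hnp : 0 ≤ n * p := mul_nonneg (by linarith) hp
  refine ⟨n * p * (k - t) / k, n * p * (t - (k - 1)) / (k + 1), ?_, ?_, ?_, ?_, ?_⟩
  · exact div_nonneg (mul_nonneg hnp (by linarith)) (by linarith)
  · exact div_nonneg (mul_nonneg hnp (by linarith)) (by linarith)
  · -- `t (2k - t) ≤ k²` together with `n k ≤ (n - 1)(k + 1)`
    rw [div_add_div _ _ (by positivity) (by positivity), div_le_one (by positivity)]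
    have hkey : n * t * (2 * k - t) ≤ (n - 1) * k * (k + 1) := by
      nlinarith [sq_nonneg (k - t)]
    have hnt : n * p * (n - 1) = n * t := by rw [ht]; ring
    nlinarith
  · field_simp
    ring
  · field_simp
    rw [ht]
    ring

lemma exists_nat_sub_one_le_and_le {n : ℕ} {t : ℝ} (h1 : 1 ≤ t) (hn : t < n - 1) :
    ∃ k : ℕ, 2 ≤ k ∧ k + 1 ≤ n ∧ (k : ℝ) - 1 ≤ t ∧ t ≤ k := by
  have hn2 : 2 < n := by exact_mod_cast (by linarith : (2 : ℝ) < n)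
  refine ⟨⌊t⌋₊ + 1, ?_, ?_, ?_, ?_⟩
  · have := Nat.one_le_floor_iff t |>.2 h1
    omega
  · have : ⌊t⌋₊ < n - 1 := by
      rw [Nat.floor_lt (by linarith)]
      rwa [Nat.cast_sub (by omega), Nat.cast_one]
    omega
  · push_cast
    linarith [Nat.floor_le (by linarith : 0 ≤ t)]
  · push_cast
    exact (Nat.lt_floor_add_one t).le

lemma exists_sizeLaw_avoiding_one {n : ℕ} (hn : 2 ≤ n) {p : ℝ} (hp1 : p ≤ 1)
    (hp0 : 1 / ((n : ℝ) - 1) ≤ p) :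
    ∃ w : ℕ → ℝ, 0 ≤ w ∧ w 1 = 0 ∧
      ∀ j ≤ 2, ∑ m ∈ range (n + 1), w m * m.choose j = n.choose j * p ^ j := by
  rcases hp1.lt_or_eq with hp | rfl
  · have hn1 : (0 : ℝ) < n - 1 := by
      have : (2 : ℝ) ≤ n := by exact_mod_cast hn
      linarith
    have ht1 : 1 ≤ (n - 1) * p := by rwa [div_le_iff₀' hn1] at hp0
    obtain ⟨k, hk, hkn, hlo, hhi⟩ :=
      exists_nat_sub_one_le_and_le (n := n) ht1 (by nlinarith)
    obtain ⟨a, b, ha, hb, hab, hmean, hfact⟩ := exists_two_point_weights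
      (by exact_mod_cast (by omega : 1 ≤ k)) (by exact_mod_cast hkn) hlo hhi
    refine ⟨fun m => (if m = 0 then 1 - a - b else 0) + (if m = k then a else 0) +
      (if m = k + 1 then b else 0), fun m => ?_, ?_, fun j hj => ?_⟩
    · dsimp only [Pi.zero_apply]
      split_ifs <;> linarith
    · simp [show 1 ≠ k by omega, show k ≠ 0 by omega]
    · simp only [add_mul, ite_mul, zero_mul, sum_add_distrib, sum_ite_eq', mem_range,
        if_pos (show 0 < n + 1 by omega), if_pos (show k < n + 1 by omega),
        if_pos (show k + 1 < n + 1 by omega)]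
      interval_cases j
      · simp
        ring
      · simp only [Nat.choose_one_right]
        push_cast
        linear_combination hmean
      · simp only [Nat.cast_choose_two]
        push_cast
        linear_combination hfact / 2
  · refine ⟨fun m => if m = n then 1 else 0, fun m => ?_, ?_, fun j _ => ?_⟩
    · dsimp only [Pi.zero_apply]
      split_ifs <;> norm_num
    · simp
      omega
    · simp

end

theorem stmt_12 (n : ℕ) (hn : 2 ≤ n) (p : ℝ) (hp1 : p ≤ 1)
    (hp0 : 1 / ((n : ℝ) - 1) ≤ p) :
    ∃ (Ω : Type) (_ : MeasurableSpace Ω) (μ : Measure Ω) (_ : IsProbabilityMeasure μ)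
      (A : Fin n → Set Ω),
      (∀ i, MeasurableSet (A i)) ∧
      (∀ i, μ (A i) = ENNReal.ofReal p) ∧
      (∀ i j, i ≠ j → μ (A i ∩ A j) = μ (A i) * μ (A j)) ∧
      μ {ω | (∑ i, (A i).indicator (fun _ => (1 : ℕ)) ω) = 1} = 0 := by
  obtain ⟨w, hw, hw1, hmoments⟩ := exists_sizeLaw_avoiding_one hn hp1 hp0
  have hp : 0 ≤ p :=
    hp0.trans' (one_div_nonneg.2 (sub_nonneg.2 (by exact_mod_cast (by omega : 1 ≤ n))))
  have hsuperset : ∀ T : Finset (Fin n), T.card ≤ 2 →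
      sizeUniform w {S | T ⊆ S} = ENNReal.ofReal (p ^ T.card) := fun T hT =>
    sizeUniform_setOf_superset_of_moment hw (by rw [Fintype.card_fin]; exact hmoments _ hT)
  have hmem : ∀ i, sizeUniform w {S | i ∈ S} = ENNReal.ofReal p := fun i => by
    simpa using hsuperset {i} (by simp)
  refine ⟨Finset (Fin n), inferInstance, sizeUniform w, ⟨by simpa using hsuperset ∅ (by simp)⟩,
    fun i => {S | i ∈ S}, measurableSet_mem_finset, hmem, fun i j hij => ?_, ?_⟩
  · have hpair : {S : Finset (Fin n) | i ∈ S} ∩ {S | j ∈ S} = {S | {i, j} ⊆ S} := by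
      ext S
      simp [Finset.insert_subset_iff]
    rw [hpair, hsuperset _ (Finset.card_le_two), Finset.card_pair hij, hmem, hmem,
      ← ENNReal.ofReal_mul hp, sq]
  · have hcount : {S : Finset (Fin n) | ∑ i, {S : Finset (Fin n) | i ∈ S}.indicator (fun _ => 1) S
        = 1} = {S | S.card = 1} := by
      ext S
      simp [Set.indicator_apply]
    rw [hcount, sizeUniform_setOf_card_eq hw (by simp; omega), hw1, ENNReal.ofReal_zero]
end

section
/- If A_1, ..., A_n are pairwise independent events each of probability p, then the probability that exactly n−1 of them occur is at least n·(1−p)·max(0, 1 − (n−1)(1−p)), and this bound is attained for every n ≥ 2 and p ∈ [0,1]. -/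
/-!
Write `q = 1 - p`; the complements `Cᵢ = Aᵢᶜ` are again pairwise independent, with probability `q`,
and `{N = n - 1}` is the event that exactly one `Cᵢ` occurs. The sets `Cᵢ \ ⋃_{j ≠ i} Cⱼ` are
disjoint, so that probability is at least `∑ᵢ (P Cᵢ - ∑_{j ≠ i} P (Cᵢ ∩ Cⱼ)) = n q (1 - (n - 1) q)`.

For sharpness let `S ⊆ Fin n` (the set of failing events) be uniform given its size `K`, where `K`
takes the values `0, k, k + 1` with `k - 1 ≤ (n - 1) q ≤ k`. A uniform `t`-subset avoids a given
point with probability `(n - t) / n` and two given points with probability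
`(n - t) (n - t - 1) / (n (n - 1))`, so the events `{i ∉ S}` are pairwise independent of
probability `p` as soon as `E K = n q` and `E K (K - 1) = n (n - 1) q²`; these two equations
determine the law of `K`, and then `P(|S| = 1) = P(K = 1)` is the bound.
-/

open MeasureTheory ProbabilityTheory Finset

section ExactlyOne

variable {Ω ι : Type*} [Fintype ι]

lemma setOf_sum_indicator_eq_card_sub_one [Nonempty ι] (A : ι → Set Ω) :
    {ω | ∑ i, (A i).indicator (fun _ => (1 : ℕ)) ω = Fintype.card ι - 1} =
      {ω | ∃! i, ω ∉ A i} := by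
  classical
  ext ω
  have hsum : ∑ i, (A i).indicator (fun _ => (1 : ℕ)) ω = Fintype.card ι - #{i | ω ∉ A i} := by
    simp only [Set.indicator_apply, sum_boole, Nat.cast_id]
    rw [← card_compl, compl_filter]
    simp
  have hle : #{i | ω ∉ A i} ≤ Fintype.card ι := card_le_univ _
  have hpos := Fintype.card_pos (α := ι)
  rw [Set.mem_ofPred_eq, Set.mem_ofPred_eq, hsum, Fintype.existsUnique_iff_card_one]
  omega

variable [MeasurableSpace Ω] [DecidableEq ι]

lemma sum_measure_sub_sum_measure_inter_le {μ : Measure Ω} {C : ι → Set Ω}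
    (hC : ∀ i, MeasurableSet (C i)) :
    ∑ i, (μ (C i) - ∑ j ∈ univ.erase i, μ (C i ∩ C j)) ≤ μ {ω | ∃! i, ω ∈ C i} := by
  set B : ι → Set Ω := fun i => C i \ ⋃ j ∈ univ.erase i, C j
  have hB : ∀ i, μ (C i) - ∑ j ∈ univ.erase i, μ (C i ∩ C j) ≤ μ (B i) := fun i =>
    calc μ (C i) - ∑ j ∈ univ.erase i, μ (C i ∩ C j)
        ≤ μ (C i) - μ (⋃ j ∈ univ.erase i, C i ∩ C j) := by
          gcongr; exact measure_biUnion_finset_le _ _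
      _ ≤ μ (C i \ ⋃ j ∈ univ.erase i, C i ∩ C j) := le_measure_sdiff
      _ = μ (B i) := by congr 1; ext ω; simp +contextual [B]
  have hBdisj : Pairwise (Function.onFun Disjoint B) := fun i j hij =>
    Set.disjoint_left.2 fun ω hi hj => hj.2 (Set.mem_biUnion (by simpa using hij) hi.1)
  have hBsub : (⋃ i, B i) ⊆ {ω | ∃! i, ω ∈ C i} := by
    rintro ω ⟨_, ⟨i, rfl⟩, hωi, hωj⟩
    refine ⟨i, hωi, fun j hj => ?_⟩
    by_contra hji
    exact hωj (Set.mem_biUnion (by simpa using hji) hj)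
  calc ∑ i, (μ (C i) - ∑ j ∈ univ.erase i, μ (C i ∩ C j))
      ≤ ∑ i, μ (B i) := sum_le_sum fun i _ => hB i
    _ = μ (⋃ i, B i) := by
      rw [measure_iUnion hBdisj fun i =>
        (hC i).diff (.biUnion (Set.to_countable _) fun j _ => hC j), tsum_fintype]
    _ ≤ _ := measure_mono hBsub

end ExactlyOne

lemma ProbabilityTheory.IndepSet.compl {Ω : Type*} [MeasurableSpace Ω] {μ : Measure Ω}
    {s t : Set Ω} (h : IndepSet s t μ) : IndepSet sᶜ tᶜ μ :=
  Indep.indepSet_of_measurableSet h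
    (MeasurableSpace.measurableSet_generateFrom (Set.mem_singleton s)).compl
    (MeasurableSpace.measurableSet_generateFrom (Set.mem_singleton t)).compl

theorem ofReal_le_measure_sum_indicator_eq_card_sub_one {Ω ι : Type*} [MeasurableSpace Ω]
    [Fintype ι] [Nonempty ι] {μ : Measure Ω} [IsProbabilityMeasure μ] {A : ι → Set Ω} {p : ℝ}
    (hp0 : 0 ≤ p) (hp1 : p ≤ 1) (hA : ∀ i, MeasurableSet (A i))
    (hμA : ∀ i, μ (A i) = ENNReal.ofReal p)
    (hμAA : ∀ i j, i ≠ j → μ (A i ∩ A j) = ENNReal.ofReal (p ^ 2)) :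
    ENNReal.ofReal
        (Fintype.card ι * (1 - p) * max 0 (1 - (Fintype.card ι - 1) * (1 - p))) ≤
      μ {ω | ∑ i, (A i).indicator (fun _ => (1 : ℕ)) ω = Fintype.card ι - 1} := by
  classical
  have hq : 0 ≤ 1 - p := sub_nonneg.2 hp1
  have hμC : ∀ i, μ (A i)ᶜ = ENNReal.ofReal (1 - p) := fun i => by
    rw [prob_compl_eq_one_sub (hA i), hμA, ← ENNReal.ofReal_one, ENNReal.ofReal_sub _ hp0]
  have hμCC : ∀ i j, i ≠ j → μ ((A i)ᶜ ∩ (A j)ᶜ) = ENNReal.ofReal ((1 - p) ^ 2) := by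
    intro i j hij
    have hind : IndepSet (A i) (A j) μ := by
      rw [indepSet_iff_measure_inter_eq_mul (hA i) (hA j) μ, hμAA i j hij, hμA, hμA,
        ← ENNReal.ofReal_mul hp0, sq]
    rw [hind.compl.measure_inter_eq_mul, hμC, hμC, ← ENNReal.ofReal_mul hq, sq]
  have hbound : ENNReal.ofReal
      (Fintype.card ι * (1 - p) * max 0 (1 - (Fintype.card ι - 1) * (1 - p))) =
      ∑ i, (μ (A i)ᶜ - ∑ j ∈ univ.erase i, μ ((A i)ᶜ ∩ (A j)ᶜ)) := by
    rw [Finset.sum_congr rfl fun i _ => by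
      rw [hμC, Finset.sum_congr rfl fun j hj => hμCC i j (ne_of_mem_erase hj).symm]]
    simp only [sum_const, card_erase_of_mem (mem_univ _), card_univ, nsmul_eq_mul]
    rw [mul_max_of_nonneg _ _ (by positivity), mul_zero, ENNReal.ofReal_max, ENNReal.ofReal_zero,
      max_eq_right zero_le, ← ENNReal.ofReal_natCast (Fintype.card ι - 1),
      ← ENNReal.ofReal_natCast (Fintype.card ι),
      ← ENNReal.ofReal_mul (by positivity), ← ENNReal.ofReal_sub _ (by positivity),
      ← ENNReal.ofReal_mul (by positivity), Nat.cast_pred Fintype.card_pos]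
    congr 1
    ring
  rw [hbound, setOf_sum_indicator_eq_card_sub_one]
  exact sum_measure_sub_sum_measure_inter_le fun i => (hA i).compl

lemma Nat.choose_mul_choose_sub_comm (n r t : ℕ) :
    n.choose r * (n - r).choose t = n.choose t * (n - t).choose r := by
  have h₁ := Nat.choose_mul (n := n) (Nat.le_add_right r t)
  have h₂ := Nat.choose_mul (n := n) (Nat.le_add_left t r)
  rw [Nat.add_sub_cancel_left] at h₁
  rw [Nat.add_sub_cancel] at h₂
  rw [← h₁, Nat.choose_symm_add, h₂]

section UniformSubsets

variable {ι : Type*} [Fintype ι]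

variable (ι) in
noncomputable def uniformSubset (t : ℕ) : Measure (Finset ι) :=
  uniformOn ((powersetCard t univ : Finset (Finset ι)) : Set (Finset ι))

/-- A uniform `t`-subset avoids a fixed `r`-set as often as a uniform `r`-subset avoids a fixed
`t`-set. -/
lemma uniformSubset_disjoint [DecidableEq ι] {t : ℕ} (ht : t ≤ Fintype.card ι) (X : Finset ι) :
    uniformSubset ι t {S | Disjoint S X} =
      ENNReal.ofReal ((Fintype.card ι - t).choose #X / (Fintype.card ι).choose #X) := by
  have hX : #X ≤ Fintype.card ι := card_le_univ X
  have hset :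
      {S : Finset ι | Disjoint S X} = ((univ.filter (Disjoint · X) : Finset _) : Set _) := by
    ext; simp
  have hinter : powersetCard t univ ∩ univ.filter (Disjoint · X) = powersetCard t Xᶜ := by
    ext S; simp [mem_powersetCard, subset_compl_iff_disjoint_right, and_comm]
  rw [uniformSubset, hset, uniformOn_apply_finset, hinter, card_powersetCard, card_powersetCard,
    card_compl, card_univ, ENNReal.ofReal_div_of_pos (by exact_mod_cast Nat.choose_pos hX),
    ENNReal.ofReal_natCast, ENNReal.ofReal_natCast,
    ENNReal.div_eq_div_iff (by simpa using (Nat.choose_pos hX).ne') (by simp)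
      (by simpa using (Nat.choose_pos ht).ne') (by simp)]
  exact_mod_cast Nat.choose_mul_choose_sub_comm _ _ _

lemma uniformSubset_card_eq {t : ℕ} (ht : t ≤ Fintype.card ι) (s : ℕ) :
    uniformSubset ι t {S | #S = s} = if t = s then 1 else 0 := by
  split_ifs with hts
  · exact uniformOn_eq_one_of (finite_toSet _) (by simpa [powersetCard_nonempty])
      fun S hS => by simpa [hts] using (mem_powersetCard.1 hS).2
  · have hempty : ((powersetCard t univ : Finset (Finset ι)) : Set (Finset ι)) ∩ {S | #S = s} = ∅ :=
      Set.eq_empty_of_forall_notMem fun S ⟨hS, hSs⟩ =>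
        hts ((mem_powersetCard.1 (mem_coe.1 hS)).2.symm.trans hSs)
    rw [uniformSubset, ← uniformOn_inter_self (finite_toSet _), hempty, measure_empty]

variable (ι) in
noncomputable def sizeMixture (a b c : ℝ) (k : ℕ) : Measure (Finset ι) :=
  ENNReal.ofReal a • uniformSubset ι 0 + ENNReal.ofReal b • uniformSubset ι k +
    ENNReal.ofReal c • uniformSubset ι (k + 1)

variable {a b c p : ℝ} {k : ℕ}

lemma sizeMixture_disjoint [DecidableEq ι] (ha : 0 ≤ a) (hb : 0 ≤ b) (hc : 0 ≤ c)
    (hk : k + 1 ≤ Fintype.card ι) (X : Finset ι) :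
    sizeMixture ι a b c k {S | Disjoint S X} = ENNReal.ofReal
      ((a * (Fintype.card ι).choose #X + b * (Fintype.card ι - k).choose #X +
        c * (Fintype.card ι - (k + 1)).choose #X) / (Fintype.card ι).choose #X) := by
  simp only [sizeMixture, Measure.add_apply, Measure.smul_apply, smul_eq_mul,
    uniformSubset_disjoint (Nat.zero_le _), uniformSubset_disjoint hk,
    uniformSubset_disjoint (Nat.le_of_succ_le hk), Nat.sub_zero]
  rw [← ENNReal.ofReal_mul ha, ← ENNReal.ofReal_mul hb, ← ENNReal.ofReal_mul hc,
    ← ENNReal.ofReal_add (by positivity) (by positivity),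
    ← ENNReal.ofReal_add (by positivity) (by positivity)]
  congr 1
  ring

lemma sizeMixture_existsUnique_mem (hk1 : 1 ≤ k) (hk : k + 1 ≤ Fintype.card ι) :
    sizeMixture ι a b c k {S | ∃! i, i ∈ S} = ENNReal.ofReal (if k = 1 then b else 0) := by
  simp only [← card_eq_one_iff_existsUnique, sizeMixture, Measure.add_apply, Measure.smul_apply,
    smul_eq_mul, uniformSubset_card_eq (Nat.zero_le _), uniformSubset_card_eq hk,
    uniformSubset_card_eq (Nat.le_of_succ_le hk), if_neg zero_ne_one,
    if_neg (by omega : k + 1 ≠ 1)]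
  split_ifs <;> simp

lemma isProbabilityMeasure_sizeMixture (ha : 0 ≤ a) (hb : 0 ≤ b) (hc : 0 ≤ c)
    (hk : k + 1 ≤ Fintype.card ι) (habc : a + b + c = 1) :
    IsProbabilityMeasure (sizeMixture ι a b c k) := by
  classical
  constructor
  simpa only [disjoint_empty_right, Set.ofPred_true, card_empty, Nat.choose_zero_right,
    Nat.cast_one, mul_one, div_one, habc, ENNReal.ofReal_one] using
    sizeMixture_disjoint ha hb hc hk ∅

lemma sizeMixture_notMem (ha : 0 ≤ a) (hb : 0 ≤ b) (hc : 0 ≤ c)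
    (hk : k + 1 ≤ Fintype.card ι) (habc : a + b + c = 1)
    (hmean : k * b + (k + 1) * c = Fintype.card ι * (1 - p)) (i : ι) :
    sizeMixture ι a b c k {S | i ∉ S} = ENNReal.ofReal p := by
  classical
  have hn : (Fintype.card ι : ℝ) ≠ 0 := Nat.cast_ne_zero.2 (by omega)
  simp only [← disjoint_singleton_right]
  rw [sizeMixture_disjoint ha hb hc hk, card_singleton, Nat.choose_one_right, Nat.choose_one_right,
    Nat.choose_one_right, Nat.cast_sub (by omega), Nat.cast_sub hk]
  congr 1
  field_simp
  push_cast
  linear_combination (Fintype.card ι : ℝ) * habc - hmean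

lemma sizeMixture_notMem_inter_notMem (ha : 0 ≤ a) (hb : 0 ≤ b) (hc : 0 ≤ c)
    (hk : k + 1 ≤ Fintype.card ι) (habc : a + b + c = 1)
    (hmean : k * b + (k + 1) * c = Fintype.card ι * (1 - p))
    (hmean₂ : k * (k - 1) * b + (k + 1) * k * c =
      Fintype.card ι * (Fintype.card ι - 1) * (1 - p) ^ 2) {i j : ι} (hij : i ≠ j) :
    sizeMixture ι a b c k ({S | i ∉ S} ∩ {S | j ∉ S}) = ENNReal.ofReal (p ^ 2) := by
  classical
  have hn : 2 ≤ Fintype.card ι := by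
    simpa [card_pair hij] using card_le_univ ({i, j} : Finset ι)
  have hn1 : (Fintype.card ι : ℝ) - 1 ≠ 0 := by
    have : (2 : ℝ) ≤ Fintype.card ι := by exact_mod_cast hn
    linarith
  have hn0 : (Fintype.card ι : ℝ) ≠ 0 := Nat.cast_ne_zero.2 (by omega)
  have hset : {S : Finset ι | i ∉ S} ∩ {S | j ∉ S} = {S | Disjoint S {i, j}} := by
    ext S; simp [disjoint_insert_right]
  rw [hset, sizeMixture_disjoint ha hb hc hk, card_pair hij, Nat.cast_choose_two,
    Nat.cast_choose_two, Nat.cast_choose_two, Nat.cast_sub (by omega), Nat.cast_sub hk]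
  congr 1
  field_simp
  push_cast
  linear_combination (Fintype.card ι * (Fintype.card ι - 1) : ℝ) * habc -
    2 * (Fintype.card ι - 1) * hmean + hmean₂

end UniformSubsets

lemma exists_nat_sub_one_le_le {u : ℝ} {N : ℕ} (hu : 0 ≤ u) (huN : u ≤ N) (hN : 1 ≤ N) :
    ∃ k : ℕ, 1 ≤ k ∧ k ≤ N ∧ (k : ℝ) - 1 ≤ u ∧ u ≤ k := by
  refine ⟨max 1 ⌈u⌉₊, le_max_left _ _, max_le hN (Nat.ceil_le.2 huN), ?_, ?_⟩
  · rcases le_total ⌈u⌉₊ 1 with h | h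
    · simp [max_eq_left h, hu]
    · rw [max_eq_right h]
      linarith [Nat.ceil_lt_add_one hu]
  · exact (Nat.le_ceil u).trans (by exact_mod_cast le_max_right _ _)

lemma exists_size_distribution {n : ℕ} (hn : 2 ≤ n) {q : ℝ} (hq0 : 0 ≤ q) (hq1 : q ≤ 1) :
    ∃ (k : ℕ) (a b c : ℝ), 1 ≤ k ∧ k + 1 ≤ n ∧ 0 ≤ a ∧ 0 ≤ b ∧ 0 ≤ c ∧ a + b + c = 1 ∧
      k * b + (k + 1) * c = n * q ∧
      k * (k - 1) * b + (k + 1) * k * c = n * (n - 1) * q ^ 2 ∧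
      (if k = 1 then b else 0) = n * q * max 0 (1 - (n - 1) * q) := by
  have hn' : (2 : ℝ) ≤ n := by exact_mod_cast hn
  set u := ((n : ℝ) - 1) * q
  obtain ⟨k, hk1, hkn, hku, huk⟩ := exists_nat_sub_one_le_le (u := u) (N := n - 1)
    (mul_nonneg (by linarith) hq0) (by rw [Nat.cast_sub (by omega)]; push_cast; nlinarith)
    (by omega)
  have hk1' : (1 : ℝ) ≤ k := by exact_mod_cast hk1
  have hkn' : (k : ℝ) + 1 ≤ n := by exact_mod_cast (by omega : k + 1 ≤ n)
  -- `b` and `c` solve the two moment equations; `k - 1 ≤ u ≤ k` makes them nonnegative.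
  set b := n * q * (k - u) / k
  set c := n * q * (u + 1 - k) / (k + 1)
  have hb : 0 ≤ b := div_nonneg (mul_nonneg (by positivity) (by linarith)) (by positivity)
  have hc : 0 ≤ c := div_nonneg (mul_nonneg (by positivity) (by linarith)) (by positivity)
  have hbc : b + c ≤ 1 := by
    have : n * q * (2 * k - u) ≤ k * (k + 1) := by
      nlinarith [mul_nonneg (by linarith : (0 : ℝ) ≤ k) (by linarith : (0 : ℝ) ≤ n - 1 - k),
        sq_nonneg ((k : ℝ) - u)]
    have hsum : b + c = n * q * (2 * k - u) / (k * (k + 1)) := by unfold b c; field_simp; ring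
    rwa [hsum, div_le_one (by positivity)]
  refine ⟨k, 1 - b - c, b, c, hk1, by omega, by linarith, hb, hc, by ring, ?_, ?_, ?_⟩
  · unfold b c; field_simp; ring
  · unfold b c u; field_simp; ring
  · split_ifs with hk
    · subst hk
      rw [max_eq_right (by push_cast at huk; linarith)]
      unfold b; push_cast; ring
    · have hk2 : (2 : ℝ) ≤ k := by exact_mod_cast (by omega : 2 ≤ k)
      rw [max_eq_left (by linarith), mul_zero]

theorem stmt_13 (n : ℕ) (hn : 2 ≤ n) (p : ℝ) (hp0 : 0 ≤ p) (hp1 : p ≤ 1) :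
    (∀ (Ω : Type) (_ : MeasurableSpace Ω) (μ : Measure Ω), IsProbabilityMeasure μ →
      ∀ A : Fin n → Set Ω, (∀ i, MeasurableSet (A i)) →
        (∀ i, μ (A i) = ENNReal.ofReal p) →
        (∀ i j, i ≠ j → μ (A i ∩ A j) = ENNReal.ofReal (p ^ 2)) →
        ENNReal.ofReal ((n : ℝ) * (1 - p) * max 0 (1 - ((n : ℝ) - 1) * (1 - p))) ≤
          μ {ω | (∑ i, (A i).indicator (fun _ => (1 : ℕ)) ω) = n - 1}) ∧
    (∃ (Ω : Type) (_ : MeasurableSpace Ω) (μ : Measure Ω) (_ : IsProbabilityMeasure μ)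
      (A : Fin n → Set Ω),
      (∀ i, MeasurableSet (A i)) ∧
      (∀ i, μ (A i) = ENNReal.ofReal p) ∧
      (∀ i j, i ≠ j → μ (A i ∩ A j) = ENNReal.ofReal (p ^ 2)) ∧
      μ {ω | (∑ i, (A i).indicator (fun _ => (1 : ℕ)) ω) = n - 1} =
        ENNReal.ofReal ((n : ℝ) * (1 - p) * max 0 (1 - ((n : ℝ) - 1) * (1 - p)))) := by
  have : Nonempty (Fin n) := ⟨⟨0, by omega⟩⟩
  refine ⟨fun Ω _ μ _ A hA hμA hμAA => ?_, ?_⟩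
  · simpa only [Fintype.card_fin] using
      ofReal_le_measure_sum_indicator_eq_card_sub_one hp0 hp1 hA hμA hμAA
  obtain ⟨k, a, b, c, hk1, hk, ha, hb, hc, habc, hmean, hmean₂, hone⟩ :=
    exists_size_distribution hn (sub_nonneg.2 hp1) (sub_le_self 1 hp0)
  rw [← Fintype.card_fin n] at hk hmean hmean₂
  have hevent := setOf_sum_indicator_eq_card_sub_one fun i : Fin n => {S : Finset (Fin n) | i ∉ S}
  simp only [Fintype.card_fin, Set.mem_ofPred_eq, not_not] at hevent
  refine ⟨Finset (Fin n), inferInstance, sizeMixture (Fin n) a b c k,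
    isProbabilityMeasure_sizeMixture ha hb hc hk habc, fun i => {S | i ∉ S},
    fun _ => .of_discrete, sizeMixture_notMem ha hb hc hk habc hmean,
    fun _ _ => sizeMixture_notMem_inter_notMem ha hb hc hk habc hmean hmean₂, ?_⟩
  rw [hevent, sizeMixture_existsUnique_mem hk1 hk, hone]
end
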